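/- For 0 ≤ α < β ≤ 2 the even function g_α(x) := 1/(√(|r(x)|)·|x|^{(2−α)/4}) (extended by 0 on [−ε,ε]) belongs to L²(η_β) but not to L²(η_α). -/
import Mathlib


open MeasureTheory Filter

/-- `η_α(x) := (√(|x|^α+1) − √(|x|^α))·|r(x)|`. -/
noncomputable def eta (α : ℝ) (r : ℝ → ℝ) (x : ℝ) : ℝ :=
  (Real.sqrt (|x| ^ α + 1) - Real.sqrt (|x| ^ α)) * |r x|

/-- `ω_α(x) := √(|x|^α)·|r(x)|`. -/
noncomputable def omegaW (α : ℝ) (r : ℝ → ℝ) (x : ℝ) : ℝ :=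
  Real.sqrt (|x| ^ α) * |r x|

/-- `r₊(x) := x·r(x)`. -/
def rplus (r : ℝ → ℝ) (x : ℝ) : ℝ := x * r x

/-- `r₋(x) := r(x)/x` (with junk value `0` at `x = 0`, where `r` vanishes anyway). -/
noncomputable def rminus (r : ℝ → ℝ) (x : ℝ) : ℝ := r x / x

/-- Membership in the weighted space `L²(w)`. -/
def MemL2W (w : ℝ → ℝ) (f : ℝ → ℂ) : Prop :=
  Integrable (fun x => ‖f x‖ ^ 2 * w x)

/-- Even part of a function. -/
noncomputable def evenPart (f : ℝ → ℂ) (x : ℝ) : ℂ := (f x + f (-x)) / 2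

/-- Odd part of a function. -/
noncomputable def oddPart (f : ℝ → ℂ) (x : ℝ) : ℂ := (f x - f (-x)) / 2

/-- `dom t_α = {f ∈ L²(r₋) : f_e ∈ L²(η_α), f_o ∈ L²(ω_α)}`. -/
noncomputable def DomT (α : ℝ) (r : ℝ → ℝ) (f : ℝ → ℂ) : Prop :=
  MemL2W (rminus r) f ∧ MemL2W (eta α r) (evenPart f) ∧ MemL2W (omegaW α r) (oddPart f)

/-- The squared norm `t_α(f,f) = 2‖f_o‖²_{ω_α} + ‖f‖²_{η_α}`. -/
noncomputable def Qform (α : ℝ) (r : ℝ → ℝ) (f : ℝ → ℂ) : ℝ :=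
  2 * (∫ x, ‖oddPart f x‖ ^ 2 * omegaW α r x) + ∫ x, ‖f x‖ ^ 2 * eta α r x

/-- The even function `g_α(x) := 1/(√(|r(x)|)·|x|^{(2−α)/4})`, extended by `0` on `[−ε,ε]`. -/
noncomputable def galpha (r : ℝ → ℝ) (ε α : ℝ) (x : ℝ) : ℂ :=
  if |x| ≤ ε then 0
  else ((1 / (Real.sqrt |r x| * |x| ^ ((2 - α) / 4)) : ℝ) : ℂ)


section Aux
open Real Set MeasureTheory Filter

private lemma sqrt_diff_le' {a : ℝ} (ha : 0 < a) :
    Real.sqrt (a + 1) - Real.sqrt a ≤ 1 / Real.sqrt a := by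
  have hs : 0 < Real.sqrt a := Real.sqrt_pos.2 ha
  rw [le_div_iff₀ hs]
  nlinarith [Real.sq_sqrt (by linarith : (0:ℝ) ≤ a + 1), Real.sq_sqrt ha.le,
    Real.sqrt_le_sqrt (by linarith : a ≤ a + 1), Real.sqrt_nonneg (a+1)]

private lemma sqrt_diff_ge' {a : ℝ} (ha : 1 ≤ a) :
    1 / (3 * Real.sqrt a) ≤ Real.sqrt (a + 1) - Real.sqrt a := by
  have ha0 : (0:ℝ) < a := by linarith
  have hs : 0 < Real.sqrt a := Real.sqrt_pos.2 ha0
  have h1 : Real.sqrt (a + 1) ≤ 2 * Real.sqrt a := by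
    have h2 : Real.sqrt (a+1) ≤ Real.sqrt (4*a) := Real.sqrt_le_sqrt (by linarith)
    have h4 : Real.sqrt (4*a) = 2 * Real.sqrt a := by
      rw [show (4:ℝ)*a = (2*Real.sqrt a)^2 by nlinarith [Real.sq_sqrt ha0.le]]
      rw [Real.sqrt_sq (by positivity)]
    linarith [h4 ▸ h2]
  rw [div_le_iff₀ (by positivity)]
  nlinarith [Real.sq_sqrt (by linarith : (0:ℝ) ≤ a + 1), Real.sq_sqrt ha0.le,
    Real.sqrt_le_sqrt (by linarith : a ≤ a + 1), Real.sqrt_nonneg (a+1)]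

private lemma integrableOn_abs_rpow' {p ε : ℝ} (hp : p < -1) (hε : 0 < ε) :
    IntegrableOn (fun x : ℝ => |x| ^ p) {x : ℝ | ε < |x|} := by
  have hset : {x : ℝ | ε < |x|} = Iio (-ε) ∪ Ioi ε := by
    ext x; simp [lt_abs, mem_Iio, mem_Ioi, or_comm, lt_neg]
  have hIoi : IntegrableOn (fun x : ℝ => |x| ^ p) (Ioi ε) := by
    refine (integrableOn_Ioi_rpow_of_lt hp hε).congr_fun (fun x hx => ?_) measurableSet_Ioi
    rw [abs_of_pos (hε.trans hx)]
  have hIio : IntegrableOn (fun x : ℝ => |x| ^ p) (Iio (-ε)) := by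
    have h1 : Integrable ((Ioi ε).indicator (fun x : ℝ => |x| ^ p)) := by
      rwa [integrable_indicator_iff measurableSet_Ioi]
    have h2 := h1.comp_neg
    have h3 : (fun x : ℝ => ((Ioi ε).indicator (fun x : ℝ => |x| ^ p)) (-x))
        = (Iio (-ε)).indicator (fun x : ℝ => |x| ^ p) := by
      ext x
      by_cases hx : ε < -x
      · rw [Set.indicator_of_mem (by simpa using hx),
          Set.indicator_of_mem (by simp only [mem_Iio]; linarith), abs_neg]
      · rw [Set.indicator_of_notMem (by simpa using hx),
          Set.indicator_of_notMem (by simp only [mem_Iio]; push_neg; linarith)]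
    rw [h3] at h2
    rwa [integrable_indicator_iff measurableSet_Iio] at h2
  rw [hset]
  exact hIio.union hIoi

private lemma sqrt_abs_rpow (x a : ℝ) : Real.sqrt (|x| ^ a) = |x| ^ (a / 2) := by
  rw [show a/2 = a*(1/2) by ring, Real.rpow_mul (abs_nonneg x), ← Real.sqrt_eq_rpow]

private lemma galpha_key (α γ ε : ℝ) (r : ℝ → ℝ) {x : ℝ} (hx : ε < |x|) (hε : 0 < ε)
    (hr : r x ≠ 0) :
    ‖galpha r ε α x‖ ^ 2 * eta γ r x
      = (Real.sqrt (|x| ^ γ + 1) - Real.sqrt (|x| ^ γ)) * |x| ^ ((α - 2) / 2) := by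
  have hxa : (0:ℝ) < |x| := hε.trans hx
  have hra : (0:ℝ) < |r x| := abs_pos.2 hr
  have hsr : (0:ℝ) < Real.sqrt |r x| := Real.sqrt_pos.2 hra
  have hxp : (0:ℝ) < |x| ^ ((2 - α) / 4) := Real.rpow_pos_of_pos hxa _
  rw [galpha, if_neg (not_le.2 hx)]
  rw [Complex.norm_real, Real.norm_eq_abs, abs_of_pos (by positivity)]
  rw [eta]
  have h1 : (1 / (Real.sqrt |r x| * |x| ^ ((2 - α) / 4))) ^ 2
      = 1 / (|r x| * |x| ^ ((2 - α) / 2)) := by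
    have h0 : (|x| ^ ((2 - α) / 4)) ^ 2 = |x| ^ ((2 - α) / 2) := by
      rw [← Real.rpow_natCast (|x| ^ ((2 - α) / 4)) 2, ← Real.rpow_mul hxa.le]
      norm_num
      congr 1
      ring
    rw [div_pow, one_pow, mul_pow, Real.sq_sqrt hra.le, h0]
  rw [h1]
  have h2 : |x| ^ ((α - 2) / 2) = (|x| ^ ((2 - α) / 2))⁻¹ := by
    rw [← Real.rpow_neg hxa.le]
    ring_nf
  rw [h2]
  field_simp

private lemma galpha_measurable (α γ ε : ℝ) (r : ℝ → ℝ) (hrm : Measurable r)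
    (hα : 0 ≤ (2 - α) / 4) (hγ : 0 ≤ γ) :
    Measurable (fun x => ‖galpha r ε α x‖ ^ 2 * eta γ r x) := by
  have habs : Measurable (fun x : ℝ => |x|) := continuous_abs.measurable
  have hg : Measurable (galpha r ε α) := by
    unfold galpha
    refine Measurable.ite (measurableSet_le habs measurable_const) measurable_const ?_
    refine Complex.measurable_ofReal.comp ?_
    exact Measurable.div measurable_const
      ((hrm.abs.sqrt).mul ((Real.continuous_rpow_const hα).comp continuous_abs).measurable)
  have he : Measurable (eta γ r) := by
    unfold eta
    exact (Measurable.sub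
      (((Real.continuous_rpow_const hγ).comp continuous_abs).measurable.add
        measurable_const).sqrt
      ((Real.continuous_rpow_const hγ).comp continuous_abs).measurable.sqrt).mul hrm.abs
  exact ((hg.norm.pow measurable_const)).mul he

private lemma eta_nonneg (γ : ℝ) (r : ℝ → ℝ) (x : ℝ) : 0 ≤ eta γ r x := by
  unfold eta
  refine mul_nonneg (sub_nonneg.2 (Real.sqrt_le_sqrt (by linarith))) (abs_nonneg _)

end Aux

/-- For `0 ≤ α < β ≤ 2`, the function `g_α` belongs to `L²(η_β)` but not to `L²(η_α)`. -/
theorem galpha_mem_eta_beta_not_eta_alpha (α β ε : ℝ) (hα : 0 ≤ α) (hαβ : α < β) (hβ : β ≤ 2)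
    (hε : 0 < ε) (r : ℝ → ℝ) (hrm : Measurable r) (hr0 : ∀ x, |x| ≤ ε → r x = 0)
    (hrpos : ∀ᵐ x ∂(volume : Measure ℝ), ε < |x| → 0 < x * r x)
    (hrodd : ∀ x, r (-x) = -r x) :
    MemL2W (eta β r) (galpha r ε α) ∧ ¬ MemL2W (eta α r) (galpha r ε α) := by
  have h2α : α ≤ 2 := le_trans hαβ.le hβ
  have hαexp : 0 ≤ (2 - α) / 4 := by linarith
  constructor
  · -- membership in L²(η_β)
    have hβ0 : 0 ≤ β := le_trans hα hαβ.le
    have hmeas := galpha_measurable α β ε r hrm hαexp hβ0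
    set B : ℝ → ℝ := Set.indicator {x : ℝ | ε < |x|} (fun x => |x| ^ ((α - β - 2) / 2)) with hB
    have hSmeas : MeasurableSet {x : ℝ | ε < |x|} :=
      measurableSet_lt measurable_const continuous_abs.measurable
    have hBint : Integrable B := by
      rw [hB, integrable_indicator_iff hSmeas]
      exact integrableOn_abs_rpow' (by linarith) hε
    refine Integrable.mono' hBint hmeas.aestronglyMeasurable ?_
    filter_upwards [hrpos] with x hxr
    have hnn : 0 ≤ ‖galpha r ε α x‖ ^ 2 * eta β r x :=
      mul_nonneg (by positivity) (eta_nonneg β r x)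
    rw [Real.norm_eq_abs, abs_of_nonneg hnn]
    by_cases hxε : ε < |x|
    · have hxa : (0:ℝ) < |x| := hε.trans hxε
      have hBx : B x = |x| ^ ((α - β - 2) / 2) := Set.indicator_of_mem (show x ∈ {x : ℝ | ε < |x|} from hxε) _
      rw [hBx]
      by_cases hr : r x = 0
      · have : eta β r x = 0 := by simp [eta, hr]
        rw [this, mul_zero]
        positivity
      · rw [galpha_key α β ε r hxε hε hr]
        have hb : (0:ℝ) < |x| ^ β := Real.rpow_pos_of_pos hxa β
        have hΔ : Real.sqrt (|x| ^ β + 1) - Real.sqrt (|x| ^ β) ≤ |x| ^ (-(β/2)) := by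
          calc Real.sqrt (|x| ^ β + 1) - Real.sqrt (|x| ^ β)
              ≤ 1 / Real.sqrt (|x| ^ β) := sqrt_diff_le' hb
            _ = |x| ^ (-(β/2)) := by
                rw [sqrt_abs_rpow, Real.rpow_neg (abs_nonneg x), one_div]
        calc (Real.sqrt (|x| ^ β + 1) - Real.sqrt (|x| ^ β)) * |x| ^ ((α - 2)/2)
            ≤ |x| ^ (-(β/2)) * |x| ^ ((α - 2)/2) :=
              mul_le_mul_of_nonneg_right hΔ (Real.rpow_nonneg (abs_nonneg x) _)
          _ = |x| ^ ((α - β - 2)/2) := by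
              rw [← Real.rpow_add hxa]
              congr 1
              ring
    · have hg0 : galpha r ε α x = 0 := by rw [galpha, if_pos (not_lt.1 hxε)]
      have hBx : B x = 0 := Set.indicator_of_notMem (show x ∉ {x : ℝ | ε < |x|} from hxε) _
      rw [hg0, hBx]
      simp
  · -- not in L²(η_α)
    intro H
    set M : ℝ := max ε 1 with hM
    have hM0 : (0:ℝ) < M := lt_of_lt_of_le hε (le_max_left ε 1)
    have HI : MeasureTheory.IntegrableOn
        (fun x => ‖galpha r ε α x‖ ^ 2 * eta α r x) (Set.Ioi M) := H.integrableOn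
    have key2 : MeasureTheory.IntegrableOn
        (fun x : ℝ => (1/3 : ℝ) * x ^ (-1:ℝ)) (Set.Ioi M) := by
      have hmeas : Measurable (fun x : ℝ => (1/3 : ℝ) * x ^ (-1:ℝ)) := by
        have : (fun x : ℝ => (1/3 : ℝ) * x ^ (-1:ℝ)) = fun x => (1/3 : ℝ) * x⁻¹ := by
          ext x
          rw [show ((-1:ℝ)) = ((-1:ℤ):ℝ) by norm_num, Real.rpow_intCast]
          simp
        rw [this]
        exact measurable_const.mul measurable_inv
      refine Integrable.mono' HI hmeas.aestronglyMeasurable ?_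
      filter_upwards [ae_restrict_mem measurableSet_Ioi,
        MeasureTheory.ae_restrict_of_ae hrpos] with x hxM hxr
      have hx1 : (1:ℝ) < x := lt_of_le_of_lt (le_max_right ε 1) hxM
      have hx0 : (0:ℝ) < x := by linarith
      have habsx : |x| = x := abs_of_pos hx0
      have hxε : ε < |x| := by rw [habsx]; exact lt_of_le_of_lt (le_max_left ε 1) hxM
      have hr : r x ≠ 0 := by
        intro h0
        have := hxr hxε
        rw [h0, mul_zero] at this
        exact lt_irrefl 0 this
      rw [Real.norm_eq_abs, abs_of_nonneg (by positivity)]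
      rw [galpha_key α α ε r hxε hε hr]
      have ha1 : (1:ℝ) ≤ |x| ^ α := Real.one_le_rpow (by rw [habsx]; linarith) hα
      have hΔ : (1/3 : ℝ) * |x| ^ (-(α/2))
          ≤ Real.sqrt (|x| ^ α + 1) - Real.sqrt (|x| ^ α) := by
        have h5 := sqrt_diff_ge' ha1
        have h6 : 1 / (3 * Real.sqrt (|x| ^ α)) = (1/3 : ℝ) * |x| ^ (-(α/2)) := by
          rw [sqrt_abs_rpow, Real.rpow_neg (abs_nonneg x)]
          rw [one_div, mul_inv]
          ring
        linarith [h6 ▸ h5]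
      have hxa : (0:ℝ) < |x| := by rw [habsx]; exact hx0
      calc (1/3 : ℝ) * x ^ (-1:ℝ) = (1/3 : ℝ) * |x| ^ (-(α/2)) * |x| ^ ((α - 2)/2) := by
            rw [habsx, mul_assoc, ← Real.rpow_add hx0]
            congr 2
            ring
        _ ≤ (Real.sqrt (|x| ^ α + 1) - Real.sqrt (|x| ^ α)) * |x| ^ ((α - 2)/2) :=
            mul_le_mul_of_nonneg_right hΔ (Real.rpow_nonneg (abs_nonneg x) _)
    have key3 : MeasureTheory.IntegrableOn (fun x : ℝ => x ^ (-1:ℝ)) (Set.Ioi M) := by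
      have h7 := key2.const_mul (3:ℝ)
      have h8 : (fun x : ℝ => (3:ℝ) * ((1/3 : ℝ) * x ^ (-1:ℝ))) = fun x : ℝ => x ^ (-1:ℝ) := by
        ext x; ring
      rwa [h8] at h7
    rw [integrableOn_Ioi_rpow_iff hM0] at key3
    linarith
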